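/- Let w ∈ αΣ* ∩ Σ*‾α be a non-α-crossing word with |P_α(w)| ≥ 2 and |S_‾α(w)| ≥ 2. Then the set of words obtainable from w by one hairpin completion (together with w itself) equals {w} ∪ w·‾(P_α(w)) ∪ ‾(S_‾α(w))·w, where w·‾(P_α(w)) = {w‾u : u ∈ P_α(w)} and ‾(S_‾α(w))·w = {vw : ‾v ∈ S_‾α(w)}. -/

import Mathlib

open List

namespace Hairpin

variable {S : Type} [DecidableEq S]

/-- Antimorphic extension of an involution to words. -/
def comp (bar : S → S) (w : List S) : List S := (w.map bar).reverse

/-- Right hairpin completion w.r.t. primer `a`. -/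
def RH (bar : S → S) (a w z : List S) : Prop :=
  ∃ γ β : List S, w = γ ++ a ++ β ++ comp bar a ∧ z = w ++ comp bar γ

/-- Left hairpin completion w.r.t. primer `a`. -/
def LH (bar : S → S) (a w z : List S) : Prop :=
  ∃ γ β : List S, w = a ++ β ++ comp bar a ++ comp bar γ ∧ z = γ ++ w

/-- One hairpin completion step. -/
def HC (bar : S → S) (a w z : List S) : Prop := RH bar a w z ∨ LH bar a w z

/-- Iterated hairpin completion `H*_α(w)`. -/
def HCstar (bar : S → S) (a w : List S) : Set (List S) :=
  { z | Relation.ReflTransGen (HC bar a) w z }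

/-- `w` is non-`a`-crossing: every occurrence of `a` starts no later than
every occurrence of `comp bar a`. -/
def NonCrossing (bar : S → S) (a w : List S) : Prop :=
  ∀ i j : ℕ, a <+: w.drop i → comp bar a <+: w.drop j → i ≤ j

/-- The set of `a`-prefixes of `w`. -/
def Pa (a w : List S) : Set (List S) := { u | u ++ a <+: w }

/-- The set of `‾a`-suffixes of `w` (the elements are the words `‾v`). -/
def Sa (bar : S → S) (a w : List S) : Set (List S) :=
  { x | comp bar a ++ x <:+ w }

/-- The set of complements of `‾a`-suffixes of `w`, i.e. `‾(S_‾α(w))`. -/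
def barSa (bar : S → S) (a w : List S) : Set (List S) :=
  { v | comp bar a ++ comp bar v <:+ w }

/-- Kleene star of a set of words: all finite concatenations. -/
def star (X : Set (List S)) : Set (List S) :=
  { x | ∃ l : List (List S), (∀ y ∈ l, y ∈ X) ∧ x = l.flatten }

/-- `ind_α(x)`: the number of occurrences of `a` in `x ++ a` other than the
suffix occurrence, i.e. the number of positions `i < |x|` where `a` occurs. -/
def inda (a x : List S) : ℕ :=
  ((Finset.range x.length).filter (fun i => a <+: (x ++ a).drop i)).card

/-! If `α` occurred at `i` overlapping the occurrence of `‾α` at `J`, the overlap word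
`w[i, J + |α|)` would be a `‾`-palindrome; reflecting inside it an earlier occurrence of `‾α`
at `J' ≥ i` produces a new occurrence of `α` at `i + (J - J')`, still overlapping the one at
`J` and, by non-crossing, still at most `J'`. Iterating gives infinitely many occurrences of
`α` below `J'`, so two occurrences of `‾α` force every `α` to end before the last one.
This places `P_α(w)` to the left of the final `‾α`, so `w‾u` is a right hairpin completion;
symmetrically under `‾`, two occurrences of `α` make `vw` a left one. -/

section

omit [DecidableEq S]

variable {bar : S → S}

@[simp]
lemma comp_append (x y : List S) : comp bar (x ++ y) = comp bar y ++ comp bar x := by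
  simp [comp]

@[simp]
lemma length_comp (x : List S) : (comp bar x).length = x.length := by
  simp [comp]

lemma comp_comp (hbar : Function.Involutive bar) (x : List S) : comp bar (comp bar x) = x := by
  simp [comp, List.map_reverse, hbar.comp_self]

lemma comp_drop (x : List S) (k : ℕ) :
    comp bar (x.drop k) = (comp bar x).take (x.length - k) := by
  simp only [comp, List.map_drop, List.reverse_drop, List.length_map]

lemma prefix_drop_comp {u w : List S} {i : ℕ} (h : u <+: w.drop i) :
    comp bar u <+: (comp bar w).drop (w.length - i - u.length) := by
  obtain ⟨r, hr⟩ := h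
  have hw : w = w.take i ++ u ++ r := by
    rw [List.append_assoc, hr, List.take_append_drop]
  have hlen : w.length - i - u.length = (comp bar r).length := by
    have := congrArg List.length hr
    simp only [List.length_drop, List.length_append] at this
    simp only [length_comp]
    omega
  rw [hlen, hw]
  simp

lemma prefix_drop_length {u v w : List S} (h : u ++ v <+: w) : v <+: w.drop u.length := by
  obtain ⟨r, rfl⟩ := h
  simp

lemma comp_eq_self_of_take_append_comp (hbar : Function.Involutive bar) {a x : List S} {d : ℕ}
    (hd : d ≤ a.length) (h : a.take d ++ comp bar a = a ++ x) : comp bar (a ++ x) = a ++ x := by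
  have hca : comp bar a = a.drop d ++ x := by
    simpa [List.drop_append, hd] using congrArg (List.drop d) h
  have hdrop : comp bar (a.drop d) = a.drop d := by
    rw [comp_drop, hca, List.take_left' (by simp)]
  have hx : comp bar (a.take d) = x := by
    have : comp bar a = comp bar (a.drop d) ++ comp bar (a.take d) := by
      rw [← comp_append, List.take_append_drop]
    rw [hdrop, hca] at this
    exact (List.append_cancel_left this).symm
  rw [← h, comp_append, comp_comp hbar, hx, h]

/-- Reflection in the palindrome `l[0, d + |a|)` formed by overlapping `a` and `‾a`. -/
lemma prefix_drop_sub_of_overlap (hbar : Function.Involutive bar) {a l : List S} {p d : ℕ}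
    (ha : a <+: l) (hp : comp bar a <+: l.drop p) (hd : comp bar a <+: l.drop d) (hpd : p < d)
    (hda : d < a.length) : a <+: l.drop (d - p) := by
  have hlen : d + a.length ≤ l.length := by
    have := hd.length_le
    simp only [length_comp, List.length_drop] at this
    omega
  have hv : l.take (d + a.length) = a ++ (l.drop a.length).take d := by
    rw [Nat.add_comm, List.take_add, ← List.prefix_iff_eq_take.mp ha]
  have hv' : l.take (d + a.length) = a.take d ++ comp bar a := by
    have hta : a.take d = l.take d := by
      rw [List.prefix_iff_eq_take.mp ha, List.take_take, Nat.min_eq_left (by simpa using hda.le)]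
    rw [List.take_add, hta, List.prefix_iff_eq_take.mp hd, length_comp]
  have hpal : comp bar (l.take (d + a.length)) = l.take (d + a.length) := by
    rw [hv]
    exact comp_eq_self_of_take_append_comp hbar hda.le (hv'.symm.trans hv)
  have hocc : comp bar a <+: (l.take (d + a.length)).drop p := by
    rw [List.drop_take]
    exact List.prefix_take_iff.mpr ⟨hp, by simp only [length_comp]; omega⟩
  have hrefl := prefix_drop_comp (bar := bar) hocc
  rw [hpal, comp_comp hbar, length_comp, List.length_take, Nat.min_eq_left hlen,
    show d + a.length - p - a.length = d - p by omega, List.drop_take] at hrefl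
  exact hrefl.trans (List.take_prefix _ _)

variable {a w : List S}

namespace NonCrossing

lemma length_pos (hnc : NonCrossing bar a w) : 0 < a.length := by
  by_contra! h
  have := hnc 1 0 (by simp_all) (by simp_all [comp])
  omega

lemma complement (hbar : Function.Involutive bar) (hnc : NonCrossing bar a w) :
    NonCrossing bar a (comp bar w) := by
  intro i j hi hj
  have := hnc.length_pos
  have hi' := prefix_drop_comp (bar := bar) hi
  have hj' := prefix_drop_comp (bar := bar) hj
  have li := hi.length_le
  have lj := hj.length_le
  simp only [comp_comp hbar, length_comp, List.length_drop] at hi' hj' li lj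
  have := hnc _ _ hj' hi'
  omega

lemma add_length_le_of_comp_prefix_drop (hbar : Function.Involutive bar)
    (hnc : NonCrossing bar a w) {J' J i : ℕ} (hJ' : comp bar a <+: w.drop J')
    (hJ : comp bar a <+: w.drop J) (hJJ : J' < J) (hi : a <+: w.drop i) :
    i + a.length ≤ J := by
  induction hk : J' - i using Nat.strong_induction_on generalizing i with
  | _ k ih =>
  by_contra! hover
  have hiJ' := hnc _ _ hi hJ'
  have hnext : a <+: w.drop (i + (J - J')) := by
    have h := prefix_drop_sub_of_overlap hbar hi (p := J' - i) (d := J - i)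
      (by simpa [List.drop_drop, hiJ'] using hJ')
      (by simpa [List.drop_drop, show i ≤ J by omega] using hJ) (by omega) (by omega)
    simpa [List.drop_drop, show i + (J - i - (J' - i)) = i + (J - J') by omega] using h
  have := hnc _ _ hnext hJ'
  have := ih _ (by omega) hnext rfl
  omega

lemma add_length_le_of_prefix_drop (hbar : Function.Involutive bar)
    (hnc : NonCrossing bar a w) {i i' j : ℕ} (hi : a <+: w.drop i) (hi' : a <+: w.drop i')
    (hii : i < i') (hj : comp bar a <+: w.drop j) : i + a.length ≤ j := by
  have ri := prefix_drop_comp (bar := bar) hi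
  have ri' := prefix_drop_comp (bar := bar) hi'
  have rj := prefix_drop_comp (bar := bar) hj
  have li := hi.length_le
  have li' := hi'.length_le
  have lj := hj.length_le
  simp only [comp_comp hbar, length_comp, List.length_drop] at ri ri' rj li li' lj
  have := hnc.length_pos
  have := (hnc.complement hbar).add_length_le_of_comp_prefix_drop hbar ri' ri (by omega) rj
  omega

end NonCrossing

lemma rh_of_mem_Pa (hbar : Function.Involutive bar) (hnc : NonCrossing bar a w)
    (hs : comp bar a <:+ w) {x : List S} (hx : x ∈ Sa bar a w) (hx0 : x ≠ [])
    {u : List S} (hu : u ∈ Pa a w) : RH bar a w (w ++ comp bar u) := by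
  obtain ⟨q, hq⟩ := hs
  obtain ⟨q', hq'⟩ := hx
  have hlt : q'.length < q.length := by
    have h := congrArg List.length hq
    have h' := congrArg List.length hq'
    simp only [List.length_append, length_comp] at h h'
    have := List.length_pos_iff.mpr hx0
    omega
  have hJ' : comp bar a <+: w.drop q'.length :=
    prefix_drop_length ⟨x, by rw [List.append_assoc, hq']⟩
  have hJ : comp bar a <+: w.drop q.length := prefix_drop_length ⟨[], by simpa using hq⟩
  have hend := hnc.add_length_le_of_comp_prefix_drop hbar hJ' hJ hlt (prefix_drop_length hu)
  obtain ⟨β, rfl⟩ := List.prefix_of_prefix_length_le hu ⟨_, hq⟩ (by simpa using hend)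
  exact ⟨u, β, hq.symm, rfl⟩

lemma lh_of_mem_barSa (hbar : Function.Involutive bar) (hnc : NonCrossing bar a w)
    (hp : a <+: w) {u : List S} (hu : u ∈ Pa a w) (hu0 : u ≠ [])
    {v : List S} (hv : v ∈ barSa bar a w) : LH bar a w (v ++ w) := by
  obtain ⟨q, hq⟩ := hv
  have hstart := hnc.add_length_le_of_prefix_drop hbar (i := 0) (by simpa using hp)
    (prefix_drop_length hu) (List.length_pos_iff.mpr hu0)
    (prefix_drop_length ⟨_, by rw [List.append_assoc, hq]⟩)
  obtain ⟨β, rfl⟩ := List.prefix_of_prefix_length_le hp ⟨_, hq⟩ (by simpa using hstart)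
  exact ⟨v, β, by simp [← hq], rfl⟩

end

theorem stmt6_general (bar : S → S) (hbar : Function.Involutive bar)
    (a w : List S)
    (hp : a <+: w) (hs : comp bar a <:+ w)
    (hnc : NonCrossing bar a w)
    (hP2 : ∃ x ∈ Pa a w, ∃ y ∈ Pa a w, x ≠ y)
    (hS2 : ∃ x ∈ Sa bar a w, ∃ y ∈ Sa bar a w, x ≠ y) :
    insert w { z | HC bar a w z } =
      insert w ((fun u => w ++ comp bar u) '' Pa a w ∪
        (fun v => v ++ w) '' barSa bar a w) := by
  obtain ⟨u₀, hu₀, hu₀0⟩ := Set.Nontrivial.exists_ne hP2 []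
  obtain ⟨x₀, hx₀, hx₀0⟩ := Set.Nontrivial.exists_ne hS2 []
  ext z
  simp only [Set.mem_insert_iff, Set.mem_ofPred_eq, Set.mem_union, Set.mem_image]
  refine or_congr_right ⟨?_, ?_⟩
  · rintro (⟨γ, β, rfl, rfl⟩ | ⟨γ, β, rfl, rfl⟩)
    · exact .inl ⟨γ, ⟨β ++ comp bar a, by simp⟩, rfl⟩
    · exact .inr ⟨γ, ⟨a ++ β, by simp⟩, rfl⟩
  · rintro (⟨u, hu, rfl⟩ | ⟨v, hv, rfl⟩)
    · exact .inl (rh_of_mem_Pa hbar hnc hs hx₀ hx₀0 hu)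
    · exact .inr (lh_of_mem_barSa hbar hnc hp hu₀ hu₀0 hv)

theorem stmt6 (bar : S → S) (hbar : Function.Involutive bar)
    (a w : List S) (ha : a ≠ comp bar a)
    (hp : a <+: w) (hs : comp bar a <:+ w)
    (hnc : NonCrossing bar a w)
    (hP2 : ∃ x ∈ Pa a w, ∃ y ∈ Pa a w, x ≠ y)
    (hS2 : ∃ x ∈ Sa bar a w, ∃ y ∈ Sa bar a w, x ≠ y) :
    insert w { z | HC bar a w z } =
      insert w ((fun u => w ++ comp bar u) '' Pa a w ∪
        (fun v => v ++ w) '' barSa bar a w) :=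
  stmt6_general bar hbar a w hp hs hnc hP2 hS2

end Hairpin
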